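/- arXiv:2401.09790 — 2 statements merged into one kernel-verified Lean document; each statement's English description precedes it below -/
import Mathlib

section
/- Let h : (−ε,ε) → ℂ be smooth and let k ≥ 1 be an integer. Then the k-fold iterate of the radial operator applied to the function r ↦ h(r)·r^{2(k+1)} tends to 0 at the origin: lim_{r→0⁺} (L_A^k (r ↦ h(r)·r^{2(k+1)}))(r) = 0 (all iterates being defined on (0,ε), where the function is smooth). -/
open Set Topology Filter

/-- The radial part `L_A g = g'' + ((d-1)/r + B'(r)/B(r)) g'` of the Laplacian of a
`d`-dimensional harmonic manifold with volume density `A r = r^(d-1) * B r`. -/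
noncomputable def radialLaplacian (d : ℕ) (B : ℝ → ℝ) (g : ℝ → ℂ) : ℝ → ℂ :=
  fun r => deriv (deriv g) r +
    ((((d : ℝ) - 1) / r + deriv B r / B r : ℝ) : ℂ) * deriv g r

/-- The radial Laplacian is a local operator. -/
lemma radialLaplacian_congrOn (d : ℕ) (B : ℝ → ℝ) {f g : ℝ → ℂ} {S : Set ℝ}
    (hS : IsOpen S) (hfg : EqOn f g S) :
    EqOn (radialLaplacian d B f) (radialLaplacian d B g) S := by
  have hd1 : ∀ x ∈ S, deriv f x = deriv g x := fun x hx =>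
    (Filter.eventuallyEq_of_mem (hS.mem_nhds hx) hfg).deriv_eq
  intro r hr
  have hd2 : deriv (deriv f) r = deriv (deriv g) r :=
    (Filter.eventuallyEq_of_mem (hS.mem_nhds hr) hd1).deriv_eq
  simp only [radialLaplacian, hd2, hd1 r hr]

/-- One application of the radial Laplacian to `u(x)·x^(n+2)` yields `v(x)·x^n`
with `v` smooth. -/
lemma radialLaplacian_step (d : ℕ) (ε : ℝ) (hε : 0 < ε)
    (B : ℝ → ℝ) (hB : ContDiffOn ℝ (⊤ : ℕ∞) B (Ioo (-ε) ε))
    (hBpos : ∀ r ∈ Ioo (-ε) ε, 0 < B r)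
    (u : ℝ → ℂ) (hu : ContDiffOn ℝ (⊤ : ℕ∞) u (Ioo (-ε) ε)) (n : ℕ) :
    ∃ v : ℝ → ℂ, ContDiffOn ℝ (⊤ : ℕ∞) v (Ioo (-ε) ε) ∧
      ∀ r ∈ Ioo (0:ℝ) ε,
        radialLaplacian d B (fun x => u x * (x:ℂ) ^ (n + 2)) r = v r * (r:ℂ) ^ n := by
  set S : Set ℝ := Ioo (-ε) ε with hSdef
  have hSopen : IsOpen S := isOpen_Ioo
  have hsub : Ioo (0:ℝ) ε ⊆ S := fun x hx => ⟨lt_of_lt_of_le (neg_neg_iff_pos.mpr hε) hx.1.le, hx.2⟩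
  have hu' : ContDiffOn ℝ (⊤ : ℕ∞) (deriv u) S := hu.deriv_of_isOpen hSopen (by simp)
  have hu'' : ContDiffOn ℝ (⊤ : ℕ∞) (deriv (deriv u)) S := hu'.deriv_of_isOpen hSopen (by simp)
  have hB' : ContDiffOn ℝ (⊤ : ℕ∞) (deriv B) S := hB.deriv_of_isOpen hSopen (by simp)
  have hq : ContDiffOn ℝ (⊤ : ℕ∞) (fun x => deriv B x / B x) S :=
    hB'.div hB (fun x hx => (hBpos x hx).ne')
  have hqC : ContDiffOn ℝ (⊤ : ℕ∞) (fun x => ((deriv B x / B x : ℝ) : ℂ)) S :=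
    Complex.ofRealCLM.contDiff.comp_contDiffOn hq
  have hxC : ContDiffOn ℝ (⊤ : ℕ∞) (fun x : ℝ => (x:ℂ)) S :=
    Complex.ofRealCLM.contDiff.contDiffOn
  -- differentiability facts at points of S
  have hdu : ∀ x ∈ S, HasDerivAt u (deriv u x) x := fun x hx =>
    (((hu.contDiffAt (hSopen.mem_nhds hx)).differentiableAt (by simp)).hasDerivAt)
  have hdu' : ∀ x ∈ S, HasDerivAt (deriv u) (deriv (deriv u) x) x := fun x hx =>
    (((hu'.contDiffAt (hSopen.mem_nhds hx)).differentiableAt (by simp)).hasDerivAt)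
  have hpow : ∀ (m : ℕ) (x : ℝ), HasDerivAt (fun y : ℝ => (y:ℂ) ^ (m+1))
      ((m+1 : ℕ) * (x:ℂ) ^ m) x := by
    intro m x
    simpa using (hasDerivAt_pow (m+1) (x:ℂ)).comp_ofReal
  -- first derivative of u(x)·x^(n+2) on S
  have key1 : ∀ x ∈ S, HasDerivAt (fun y : ℝ => u y * (y:ℂ) ^ (n+2))
      (deriv u x * (x:ℂ) ^ (n+2) + u x * ((n+2 : ℕ) * (x:ℂ) ^ (n+1))) x := by
    intro x hx
    exact (hdu x hx).mul (hpow (n+1) x)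
  have deriv1 : ∀ x ∈ S, deriv (fun y : ℝ => u y * (y:ℂ) ^ (n+2)) x
      = deriv u x * (x:ℂ) ^ (n+2) + u x * ((n+2 : ℕ) * (x:ℂ) ^ (n+1)) := fun x hx =>
    (key1 x hx).deriv
  refine ⟨fun x => deriv (deriv u) x * (x:ℂ) ^ 2
      + ((2 * (n+2 : ℕ) : ℂ) + (d:ℂ) - 1) * deriv u x * (x:ℂ)
      + (((n+2 : ℕ) * (n+1 : ℕ) : ℂ) + ((d:ℂ) - 1) * (n+2 : ℕ)) * u x
      + ((deriv B x / B x : ℝ) : ℂ) * (deriv u x * (x:ℂ) ^ 2 + (n+2 : ℕ) * u x * (x:ℂ)),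
    ?_, ?_⟩
  · exact (((hu''.mul (hxC.pow 2)).add
      ((contDiffOn_const.mul hu').mul hxC)).add
      (contDiffOn_const.mul hu)).add
      (hqC.mul ((hu'.mul (hxC.pow 2)).add ((contDiffOn_const.mul hu).mul hxC)))
  · intro r hr
    have hrS : r ∈ S := hsub hr
    have hr0 : (r:ℝ) ≠ 0 := ne_of_gt hr.1
    have hR0 : (r:ℂ) ≠ 0 := Complex.ofReal_ne_zero.mpr hr0
    -- second derivative
    have key2 : HasDerivAt (fun x => deriv u x * (x:ℂ) ^ (n+2)
        + u x * ((n+2 : ℕ) * (x:ℂ) ^ (n+1)))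
        (deriv (deriv u) r * (r:ℂ) ^ (n+2) + deriv u r * ((n+2 : ℕ) * (r:ℂ) ^ (n+1))
          + (deriv u r * ((n+2 : ℕ) * (r:ℂ) ^ (n+1))
            + u r * ((n+2 : ℕ) * ((n+1 : ℕ) * (r:ℂ) ^ n)))) r := by
      have h1 := (hdu' r hrS).mul (hpow (n+1) r)
      have h2 := (hdu r hrS).mul ((hpow n r).const_mul ((n+2 : ℕ) : ℂ))
      have h3 := h1.add h2
      exact h3
    have hev : deriv (fun y : ℝ => u y * (y:ℂ) ^ (n+2))
        =ᶠ[𝓝 r] (fun x => deriv u x * (x:ℂ) ^ (n+2) + u x * ((n+2 : ℕ) * (x:ℂ) ^ (n+1))) :=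
      Filter.eventuallyEq_of_mem (hSopen.mem_nhds hrS) deriv1
    have hderiv2 : deriv (deriv (fun y : ℝ => u y * (y:ℂ) ^ (n+2))) r
        = deriv (deriv u) r * (r:ℂ) ^ (n+2) + deriv u r * ((n+2 : ℕ) * (r:ℂ) ^ (n+1))
          + (deriv u r * ((n+2 : ℕ) * (r:ℂ) ^ (n+1))
            + u r * ((n+2 : ℕ) * ((n+1 : ℕ) * (r:ℂ) ^ n))) := by
      rw [hev.deriv_eq]; exact key2.deriv
    simp only [radialLaplacian, hderiv2, deriv1 r hrS]
    rw [Complex.ofReal_add, Complex.ofReal_div, Complex.ofReal_sub,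
      Complex.ofReal_natCast, Complex.ofReal_one]
    have hpow2 : (r:ℂ) ^ (n+2) = (r:ℂ) ^ n * (r:ℂ) ^ 2 := by ring
    have hpow1 : (r:ℂ) ^ (n+1) = (r:ℂ) ^ n * (r:ℂ) := by ring
    rw [hpow2, hpow1]
    field_simp
    ring

/-- Let `d ≥ 2`, `ε > 0`, and let `B` be a smooth even positive
function on `(-ε,ε)` with `B 0 = 1` and `B' 0 = 0`.  Let `h` be smooth on `(-ε,ε)` and
`k ≥ 1`.  Then the `k`-fold iterate of the radial operator `L_A` applied to
`r ↦ h(r)·r^(2(k+1))` tends to `0` as `r → 0⁺`. -/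
theorem stmt_10
    (d : ℕ) (hd : 2 ≤ d) (ε : ℝ) (hε : 0 < ε)
    (B : ℝ → ℝ) (hB : ContDiffOn ℝ (⊤ : ℕ∞) B (Ioo (-ε) ε))
    (hBeven : ∀ r ∈ Ioo (-ε) ε, B (-r) = B r)
    (hB0 : B 0 = 1) (hB'0 : deriv B 0 = 0)
    (hBpos : ∀ r ∈ Ioo (-ε) ε, 0 < B r)
    (h : ℝ → ℂ) (hh : ContDiffOn ℝ (⊤ : ℕ∞) h (Ioo (-ε) ε))
    (k : ℕ) (hk : 1 ≤ k) :
    Tendsto ((radialLaplacian d B)^[k] (fun r : ℝ => h r * (r : ℂ) ^ (2 * (k + 1))))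
      (𝓝[>] (0 : ℝ)) (𝓝 0) := by
  set g0 : ℝ → ℂ := fun r : ℝ => h r * (r : ℂ) ^ (2 * (k + 1)) with hg0
  -- main induction
  have main : ∀ j : ℕ, j ≤ k → ∃ u : ℝ → ℂ, ContDiffOn ℝ (⊤ : ℕ∞) u (Ioo (-ε) ε) ∧
      ∀ r ∈ Ioo (0:ℝ) ε, (radialLaplacian d B)^[j] g0 r = u r * (r:ℂ) ^ (2 * (k - j) + 2) := by
    intro j
    induction j with
    | zero =>
      intro _
      refine ⟨h, hh, fun r _ => ?_⟩
      have : 2 * (k - 0) + 2 = 2 * (k + 1) := by omega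
      rw [this, Function.iterate_zero_apply]
    | succ j ih =>
      intro hjk
      obtain ⟨u, hu, hrep⟩ := ih (le_of_lt (Nat.lt_of_succ_le hjk))
      have hexp : 2 * (k - j) + 2 = (2 * (k - (j+1)) + 2) + 2 := by omega
      set N : ℕ := 2 * (k - (j+1)) + 2 with hN
      obtain ⟨v, hv, hvrep⟩ := radialLaplacian_step d ε hε B hB hBpos u hu N
      refine ⟨v, hv, fun r hr => ?_⟩
      have heq : EqOn ((radialLaplacian d B)^[j] g0) (fun x => u x * (x:ℂ) ^ (N + 2))
          (Ioo (0:ℝ) ε) := by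
        intro x hx
        rw [hrep x hx, hexp]
      rw [Function.iterate_succ_apply',
        radialLaplacian_congrOn d B isOpen_Ioo heq hr, hvrep r hr]
  obtain ⟨u, hu, hrep⟩ := main k le_rfl
  have h0S : (0:ℝ) ∈ Ioo (-ε) ε := ⟨neg_neg_iff_pos.mpr hε, hε⟩
  have hcont : Tendsto u (𝓝[Ioo (-ε) ε] 0) (𝓝 (u 0)) :=
    hu.continuousOn.continuousWithinAt h0S
  have hle : 𝓝[>] (0:ℝ) ≤ 𝓝[Ioo (-ε) ε] (0:ℝ) := by
    rw [← nhdsWithin_Ioo_eq_nhdsGT hε]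
    exact nhdsWithin_mono _ (fun x hx => ⟨lt_of_lt_of_le (neg_neg_iff_pos.mpr hε) hx.1.le, hx.2⟩)
  have hu0 : Tendsto u (𝓝[>] (0:ℝ)) (𝓝 (u 0)) := hcont.mono_left hle
  have hr2 : Tendsto (fun r : ℝ => (r:ℂ) ^ 2) (𝓝[>] (0:ℝ)) (𝓝 0) := by
    have : Continuous (fun r : ℝ => (r:ℂ) ^ 2) := (Complex.continuous_ofReal).pow 2
    have h2 : Tendsto (fun r : ℝ => (r:ℂ) ^ 2) (𝓝[>] (0:ℝ)) (𝓝 ((0:ℂ) ^ 2)) :=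
      ((this.tendsto 0).mono_left (nhdsWithin_le_nhds : 𝓝[>] (0:ℝ) ≤ 𝓝 0)).congr
        (fun x => by norm_num)
    simpa using h2
  have hlim : Tendsto (fun r : ℝ => u r * (r:ℂ) ^ 2) (𝓝[>] (0:ℝ)) (𝓝 0) := by
    have := hu0.mul hr2
    simpa using this
  refine Tendsto.congr' ?_ hlim
  exact Filter.eventuallyEq_of_mem (Ioo_mem_nhdsGT_of_mem ⟨le_refl 0, hε⟩)
    (fun r hr => by
      have := hrep r hr
      have h2 : 2 * (k - k) + 2 = 2 := by omega
      rw [h2] at this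
      exact this.symm)
end

section
/- For every integer k ≥ 1 there exist real constants c_{k,1}, …, c_{k,k} with c_{k,k} ≠ 0, depending only on d, B and k (and not on the function), such that for every smooth even function u : (−ε,ε) → ℂ the limit lim_{r→0⁺} (L_A^k u)(r) exists and equals Σ_{j=1}^{k} c_{k,j} · u^{(2j)}(0). Consequently, each even derivative u^{(2k)}(0) equals a fixed linear combination (with coefficients independent of u) of the limits lim_{r→0⁺} (L_A^j u)(r) for j = 1, …, k. -/
open Set Topology Filter

namespace Stmt11Aux

/-! ### Coefficient algebra -/

variable (lam : ℕ → ℝ) (mu : ℕ → ℕ → ℝ)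

/-- The linear map on jet-sequences induced by one application of the radial Laplacian. -/
noncomputable def stepMap (a : ℕ → ℂ) : ℕ → ℂ :=
  fun m => (lam m : ℂ) * a (m + 1) + ∑ j ∈ Finset.Icc 1 m, (mu m j : ℂ) * a j

/-- Coefficients of the `k`-fold iterate of `stepMap`. -/
noncomputable def ecoef : ℕ → ℕ → ℕ → ℝ
  | 0, m, j => if j = m then 1 else 0
  | (k + 1), m, j =>
      lam m * ecoef k (m + 1) j + ∑ i ∈ Finset.Icc 1 m, mu m i * ecoef k i j

lemma ecoef_eq_zero : ∀ k m j, m + k < j → ecoef lam mu k m j = 0 := by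
  intro k
  induction k with
  | zero =>
      intro m j h
      simp only [ecoef]
      rw [if_neg]; omega
  | succ k ih =>
      intro m j h
      simp only [ecoef]
      rw [ih (m + 1) j (by omega)]
      rw [Finset.sum_eq_zero, mul_zero, zero_add]
      intro i hi
      rw [ih i j (by simp only [Finset.mem_Icc] at hi; omega), mul_zero]

lemma ecoef_diag : ∀ k m, ecoef lam mu k m (m + k) = ∏ i ∈ Finset.range k, lam (m + i) := by
  intro k
  induction k with
  | zero => intro m; simp [ecoef]
  | succ k ih =>
      intro m
      simp only [ecoef]
      rw [Finset.sum_eq_zero, add_zero]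
      · have h1 : m + (k + 1) = (m + 1) + k := by omega
        rw [h1, ih (m + 1)]
        rw [Finset.prod_range_succ']
        simp only [add_zero]
        rw [mul_comm]
        congr 1
        apply Finset.prod_congr rfl
        intro i _
        congr 1
        omega
      · intro i hi
        rw [ecoef_eq_zero]
        · ring
        · simp only [Finset.mem_Icc] at hi; omega

lemma stepMap_iter (a : ℕ → ℂ) :
    ∀ k m, (k = 0 → 1 ≤ m) →
      (stepMap lam mu)^[k] a m =
        ∑ j ∈ Finset.Icc 1 (m + k), ((ecoef lam mu k m j : ℝ) : ℂ) * a j := by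
  intro k
  induction k with
  | zero =>
      intro m hm
      simp only [Function.iterate_zero, id_eq, ecoef, add_zero]
      rw [Finset.sum_eq_single m]
      · simp
      · intro b _ hb; rw [if_neg hb]; simp
      · intro hm'; exact absurd (Finset.mem_Icc.mpr ⟨hm rfl, le_refl m⟩) hm'
  | succ k ih =>
      intro m _
      have h1 : (stepMap lam mu)^[k + 1] a m =
          (lam m : ℂ) * ((stepMap lam mu)^[k] a (m + 1)) +
            ∑ i ∈ Finset.Icc 1 m, (mu m i : ℂ) * ((stepMap lam mu)^[k] a i) := by
        rw [Function.iterate_succ_apply']; rfl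
      have hinner : ∀ i ∈ Finset.Icc 1 m,
          (mu m i : ℂ) * ((stepMap lam mu)^[k] a i) =
            (mu m i : ℂ) * ∑ j ∈ Finset.Icc 1 (m + 1 + k), ((ecoef lam mu k i j : ℝ) : ℂ) * a j := by
        intro i hi
        simp only [Finset.mem_Icc] at hi
        congr 1
        rw [ih i (fun _ => hi.1)]
        apply Finset.sum_subset (Finset.Icc_subset_Icc le_rfl (by omega : i + k ≤ m + 1 + k))
        intro j hj hj'
        simp only [Finset.mem_Icc, not_and, not_le] at hj hj'
        rw [ecoef_eq_zero lam mu k i j (by omega)]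
        simp
      rw [h1, ih (m + 1) (by omega), Finset.sum_congr rfl hinner]
      have hm1 : m + (k + 1) = m + 1 + k := by omega
      rw [hm1, Finset.mul_sum]
      rw [Finset.sum_congr rfl fun i _ =>
        Finset.mul_sum (Finset.Icc 1 (m + 1 + k)) (fun j => ((ecoef lam mu k i j : ℝ) : ℂ) * a j)
          ((mu m i : ℝ) : ℂ)]
      rw [Finset.sum_comm, ← Finset.sum_add_distrib]
      refine Finset.sum_congr rfl fun j _ => ?_
      simp only [ecoef]
      push_cast
      rw [add_mul, Finset.sum_mul]
      congr 1
      · ring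
      · exact Finset.sum_congr rfl fun i _ => by ring

/-! ### Triangular inversion -/

noncomputable def binv (γ : ℕ → ℕ → ℝ) : ℕ → ℕ → ℝ
  | k, j =>
      ((if j = k then 1 else 0) -
        ∑ i ∈ (Finset.Icc 1 (k - 1)).attach, γ k i.1 * binv γ i.1 j) / γ k k
  termination_by k _ => k
  decreasing_by
    have := Finset.mem_Icc.mp i.2; omega

lemma binv_eq_zero (γ : ℕ → ℕ → ℝ) : ∀ k j, k < j → binv γ k j = 0 := by
  intro k
  induction k using Nat.strong_induction_on with
  | _ k ih =>
      intro j hj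
      rw [binv, if_neg (by omega), Finset.sum_eq_zero, sub_zero, zero_div]
      intro i _
      have hi := Finset.mem_Icc.mp i.2
      rw [ih i.1 (by omega) j (by omega), mul_zero]

lemma binv_spec (γ : ℕ → ℕ → ℝ) (hγ : ∀ i, 1 ≤ i → γ i i ≠ 0) :
    ∀ k, 1 ≤ k → ∀ a l : ℕ → ℂ,
      (∀ j, 1 ≤ j → j ≤ k → l j = ∑ i ∈ Finset.Icc 1 j, ((γ j i : ℝ) : ℂ) * a i) →
      a k = ∑ j ∈ Finset.Icc 1 k, ((binv γ k j : ℝ) : ℂ) * l j := by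
  intro k
  induction k using Nat.strong_induction_on with
  | _ k ih =>
      intro hk a l hl
      have hsum : ∀ i, 1 ≤ i → i ≤ k - 1 →
          ∑ j ∈ Finset.Icc 1 k, ((binv γ i j : ℝ) : ℂ) * l j = a i := by
        intro i h1 h2
        rw [← Finset.sum_subset (Finset.Icc_subset_Icc le_rfl (by omega : i ≤ k))]
        · exact (ih i (by omega) h1 a l (fun j hj1 hj2 => hl j hj1 (by omega))).symm
        · intro j hj hj'
          simp only [Finset.mem_Icc, not_and, not_le] at hj hj'
          rw [binv_eq_zero γ i j (by omega)]
          simp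
      have hγk : ((γ k k : ℝ) : ℂ) ≠ 0 := by exact_mod_cast hγ k hk
      have hcast : ∀ j : ℕ, ((binv γ k j : ℝ) : ℂ) =
          ((if j = k then (1 : ℂ) else 0) -
            ∑ i ∈ Finset.Icc 1 (k - 1), ((γ k i : ℝ) : ℂ) * ((binv γ i j : ℝ) : ℂ)) /
            ((γ k k : ℝ) : ℂ) := by
        intro j
        rw [binv]
        have hattach : (∑ i ∈ (Finset.Icc 1 (k - 1)).attach, γ k i.1 * binv γ i.1 j : ℝ) =
            ∑ i ∈ Finset.Icc 1 (k - 1), γ k i * binv γ i j :=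
          Finset.sum_attach (Finset.Icc 1 (k - 1)) (fun i => γ k i * binv γ i j)
        rw [Complex.ofReal_div, Complex.ofReal_sub, hattach,
          apply_ite (fun x : ℝ => (x : ℂ))]
        push_cast
        rfl
      have hak : a k = (l k - ∑ i ∈ Finset.Icc 1 (k - 1), ((γ k i : ℝ) : ℂ) * a i) /
          ((γ k k : ℝ) : ℂ) := by
        rw [hl k hk le_rfl]
        have hsplit : ∑ i ∈ Finset.Icc 1 k, ((γ k i : ℝ) : ℂ) * a i =
            ∑ i ∈ Finset.Icc 1 (k - 1), ((γ k i : ℝ) : ℂ) * a i +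
              ((γ k k : ℝ) : ℂ) * a k := by
          have hk1 : k = (k - 1) + 1 := by omega
          rw [hk1, Finset.sum_Icc_succ_top (by omega), ← hk1]
        rw [hsplit]
        field_simp
        ring
      rw [hak]
      symm
      calc ∑ j ∈ Finset.Icc 1 k, ((binv γ k j : ℝ) : ℂ) * l j
          = ∑ j ∈ Finset.Icc 1 k,
              (((if j = k then (1 : ℂ) else 0) -
                ∑ i ∈ Finset.Icc 1 (k - 1), ((γ k i : ℝ) : ℂ) * ((binv γ i j : ℝ) : ℂ)) /
                ((γ k k : ℝ) : ℂ)) * l j :=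
            Finset.sum_congr rfl fun j _ => by rw [hcast j]
        _ = ∑ j ∈ Finset.Icc 1 k,
              ((if j = k then (1 : ℂ) else 0) * l j / ((γ k k : ℝ) : ℂ) -
                ∑ i ∈ Finset.Icc 1 (k - 1),
                  ((γ k i : ℝ) : ℂ) * (((binv γ i j : ℝ) : ℂ) * l j) / ((γ k k : ℝ) : ℂ)) := by
            refine Finset.sum_congr rfl fun j _ => ?_
            rw [div_mul_eq_mul_div, sub_mul, Finset.sum_mul, sub_div, Finset.sum_div]
            congr 1
            exact Finset.sum_congr rfl fun i _ => by rw [mul_assoc]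
        _ = (l k - ∑ i ∈ Finset.Icc 1 (k - 1), ((γ k i : ℝ) : ℂ) * a i) / ((γ k k : ℝ) : ℂ) := by
            rw [Finset.sum_sub_distrib, sub_div]
            congr 1
            · rw [← Finset.sum_div]
              congr 1
              rw [Finset.sum_eq_single k]
              · simp
              · intro b _ hb; rw [if_neg hb]; simp
              · intro h; exact absurd (Finset.mem_Icc.mpr ⟨hk, le_rfl⟩) h
            · rw [Finset.sum_comm]
              have hinner : ∀ i ∈ Finset.Icc 1 (k - 1),
                  (∑ j ∈ Finset.Icc 1 k,
                    ((γ k i : ℝ) : ℂ) * (((binv γ i j : ℝ) : ℂ) * l j) / ((γ k k : ℝ) : ℂ)) =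
                  ((γ k i : ℝ) : ℂ) * a i / ((γ k k : ℝ) : ℂ) := by
                intro i hi
                simp only [Finset.mem_Icc] at hi
                rw [← hsum i hi.1 hi.2, Finset.mul_sum, Finset.sum_div]
              rw [Finset.sum_congr rfl hinner, ← Finset.sum_div]


section Analytic

variable {F : Type*} [NormedAddCommGroup F] [NormedSpace ℝ F]

lemma jet_odd_of_even {f : ℝ → F} (h : ∀ᶠ x in 𝓝 (0 : ℝ), f (-x) = f x) {n : ℕ}
    (hn : Odd n) : iteratedDeriv n f 0 = 0 := by
  have h1 : iteratedDeriv n (fun x => f (-x)) 0 = (-1 : ℝ) ^ n • iteratedDeriv n f 0 := by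
    simpa using iteratedDeriv_comp_neg n f 0
  have h2 : iteratedDeriv n (fun x => f (-x)) 0 = iteratedDeriv n f 0 :=
    EventuallyEq.iteratedDeriv_eq n h
  rw [h2, hn.neg_one_pow, neg_one_smul] at h1
  have h3 : iteratedDeriv n f 0 + iteratedDeriv n f 0 = 0 := by
    nth_rewrite 1 [h1]; simp
  have h4 : (2 : ℝ) • iteratedDeriv n f 0 = 0 := by rw [two_smul]; exact h3
  simpa using (smul_eq_zero.mp h4).resolve_left (by norm_num)

lemma jet_even_of_odd {f : ℝ → F} (h : ∀ᶠ x in 𝓝 (0 : ℝ), f (-x) = -f x) {n : ℕ}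
    (hn : Even n) : iteratedDeriv n f 0 = 0 := by
  have h1 : iteratedDeriv n (fun x => f (-x)) 0 = (-1 : ℝ) ^ n • iteratedDeriv n f 0 := by
    simpa using iteratedDeriv_comp_neg n f 0
  have h2 : iteratedDeriv n (fun x => f (-x)) 0 = -iteratedDeriv n f 0 := by
    rw [EventuallyEq.iteratedDeriv_eq n h, iteratedDeriv_fun_neg]
  rw [h2, hn.neg_one_pow, one_smul] at h1
  have h3 : iteratedDeriv n f 0 + iteratedDeriv n f 0 = 0 := by
    nth_rewrite 1 [← h1]; simp
  have h4 : (2 : ℝ) • iteratedDeriv n f 0 = 0 := by rw [two_smul]; exact h3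
  simpa using (smul_eq_zero.mp h4).resolve_left (by norm_num)

variable [CompleteSpace F]

lemma analyticOnNhd_iteratedDeriv {f : ℝ → F} {s : Set ℝ} (hs : IsOpen s)
    (hf : ContDiffOn ℝ (⊤ : ℕ∞) f s) (n : ℕ) :
    ContDiffOn ℝ (⊤ : ℕ∞) (iteratedDeriv n f) s := by
  induction n with
  | zero => simpa [iteratedDeriv_zero] using hf
  | succ n ih => rw [iteratedDeriv_succ]; exact ih.deriv_of_isOpen hs (by simp)

lemma hasDerivAt_iteratedDeriv {f : ℝ → F} {s : Set ℝ} (hs : IsOpen s)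
    (hf : ContDiffOn ℝ (⊤ : ℕ∞) f s) (n : ℕ)
    {x : ℝ} (hx : x ∈ s) :
    HasDerivAt (iteratedDeriv n f) (iteratedDeriv (n + 1) f x) x := by
  have h := (((analyticOnNhd_iteratedDeriv hs hf n).differentiableOn (by simp)) x hx
    |>.differentiableAt (hs.mem_nhds hx)).hasDerivAt
  rwa [iteratedDeriv_succ]

lemma itDW_eq_itD {f : ℝ → F} {s : Set ℝ} (hs : IsOpen s) {x : ℝ} (hx : x ∈ s) (n : ℕ) :
    iteratedDerivWithin n f s x = iteratedDeriv n f x := by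
  rw [iteratedDerivWithin_eq_iteratedFDerivWithin, iteratedDeriv_eq_iteratedFDeriv,
    iteratedFDerivWithin_of_isOpen n hs hx]

lemma iteratedDeriv_ofReal {φ : ℝ → ℝ} {s : Set ℝ} (hs : IsOpen s)
    (hφ : ContDiffOn ℝ (⊤ : ℕ∞) φ s) :
    ∀ n, ∀ x ∈ s, iteratedDeriv n (fun y => ((φ y : ℝ) : ℂ)) x =
      ((iteratedDeriv n φ x : ℝ) : ℂ) := by
  intro n
  induction n with
  | zero => intro x _; simp
  | succ n ih =>
      intro x hx
      rw [iteratedDeriv_succ]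
      have hev : iteratedDeriv n (fun y => ((φ y : ℝ) : ℂ)) =ᶠ[𝓝 x]
          fun y => ((iteratedDeriv n φ y : ℝ) : ℂ) := by
        filter_upwards [hs.mem_nhds hx] with y hy using ih y hy
      rw [hev.deriv_eq]
      exact (HasDerivAt.ofReal_comp (hasDerivAt_iteratedDeriv hs hφ n hx)).deriv

/-- weighted averages `∫₀¹ tⁿ φ(t x) dt`. -/
noncomputable def kavg (n : ℕ) (φ : ℝ → F) (x : ℝ) : F :=
  ∫ t in (0:ℝ)..1, (t ^ n) • φ (t * x)

lemma kavg_hasDerivAt {ε : ℝ} {φ : ℝ → F} (hφ : ContDiffOn ℝ (⊤ : ℕ∞) φ (Ioo (-ε) ε)) (n : ℕ)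
    {x : ℝ} (hx : x ∈ Ioo (-ε) ε) :
    HasDerivAt (kavg n φ) (kavg (n + 1) (deriv φ) x) x := by
  have hSo : IsOpen (Ioo (-ε) ε) := isOpen_Ioo
  have hφc : ContinuousOn φ (Ioo (-ε) ε) := hφ.continuousOn
  have hφ'c : ContinuousOn (deriv φ) (Ioo (-ε) ε) :=
    hφ.continuousOn_deriv_of_isOpen hSo (by simp)
  have hφd : ∀ z ∈ Ioo (-ε) ε, HasDerivAt φ (deriv φ z) z := fun z hz =>
    ((hφ.differentiableOn (by simp)) z hz |>.differentiableAt (hSo.mem_nhds hz)).hasDerivAt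
  set r := (|x| + ε) / 2 with hr
  have hxe : |x| < ε := abs_lt.mpr hx
  have hrε : r < ε := by rw [hr]; linarith
  have hxr : |x| < r := by rw [hr]; linarith
  have hK : Icc (-r) r ⊆ Ioo (-ε) ε := fun z hz => ⟨by linarith [hz.1], by linarith [hz.2]⟩
  obtain ⟨C, hC⟩ := (isCompact_Icc : IsCompact (Icc (-r) r)).exists_bound_of_continuousOn
    (hφ'c.mono hK)
  have hmem : ∀ t ∈ Icc (0:ℝ) 1, ∀ y ∈ Ioo (-r) r, t * y ∈ Icc (-r) r := by
    intro t ht y hy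
    have h1 : |t * y| ≤ |y| := by
      rw [abs_mul, abs_of_nonneg ht.1]; exact mul_le_of_le_one_left (abs_nonneg _) ht.2
    have h2 := abs_lt.mpr hy
    exact abs_le.mp (by linarith)
  have hxs : x ∈ Ioo (-r) r := abs_lt.mp hxr
  have hsn : Ioo (-r) r ∈ 𝓝 x := isOpen_Ioo.mem_nhds hxs
  have hcontF : ∀ y ∈ Ioo (-r) r,
      ContinuousOn (fun t : ℝ => (t ^ n) • φ (t * y)) (Icc 0 1) := by
    intro y hy
    refine (continuous_pow n).continuousOn.smul
      (hφc.comp (continuousOn_id.mul continuousOn_const) ?_)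
    intro t ht; exact hK (hmem t ht y hy)
  have hcontF' : ContinuousOn (fun t : ℝ => (t ^ (n + 1)) • deriv φ (t * x)) (Icc 0 1) := by
    refine (continuous_pow (n + 1)).continuousOn.smul
      (hφ'c.comp (continuousOn_id.mul continuousOn_const) ?_)
    intro t ht; exact hK (hmem t ht x hxs)
  have huIoc : Set.uIoc (0:ℝ) 1 ⊆ Icc 0 1 := by
    rw [uIoc_of_le zero_le_one]; exact Ioc_subset_Icc_self
  have key := intervalIntegral.hasDerivAt_integral_of_dominated_loc_of_deriv_le
    (μ := MeasureTheory.volume) (a := 0) (b := 1)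
    (F := fun y t => (t ^ n) • φ (t * y))
    (F' := fun y t => (t ^ (n + 1)) • deriv φ (t * y)) (bound := fun _ => C)
    hsn
    (by
      filter_upwards [hsn] with y hy
      exact ((hcontF y hy).mono huIoc).aestronglyMeasurable measurableSet_uIoc)
    ((hcontF x hxs).intervalIntegrable_of_Icc zero_le_one)
    ((hcontF'.mono huIoc).aestronglyMeasurable measurableSet_uIoc)
    (Filter.Eventually.of_forall fun t ht y hy => by
      have ht' := huIoc ht
      show ‖(t ^ (n + 1)) • deriv φ (t * y)‖ ≤ C
      rw [norm_smul, norm_pow, Real.norm_eq_abs, abs_of_nonneg ht'.1]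
      calc t ^ (n + 1) * ‖deriv φ (t * y)‖ ≤ 1 * C :=
            mul_le_mul (pow_le_one₀ ht'.1 ht'.2) (hC _ (hmem t ht' y hy))
              (norm_nonneg _) zero_le_one
        _ = C := one_mul C)
    intervalIntegrable_const
    (Filter.Eventually.of_forall fun t ht y hy => by
      have ht' := huIoc ht
      show HasDerivAt (fun y => (t ^ n) • φ (t * y)) ((t ^ (n + 1)) • deriv φ (t * y)) y
      have h1 := ((hφd (t * y) (hK (hmem t ht' y hy))).scomp y
        ((hasDerivAt_id y).const_mul t)).const_smul (t ^ n)
      refine h1.congr_deriv ?_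
      rw [mul_one, smul_smul, pow_succ])
  exact key.2

lemma kavg_contDiffOn {ε : ℝ} : ∀ m : ℕ, ∀ (n : ℕ) (φ : ℝ → F),
    ContDiffOn ℝ (⊤ : ℕ∞) φ (Ioo (-ε) ε) → ContDiffOn ℝ m (kavg n φ) (Ioo (-ε) ε) := by
  intro m
  induction m with
  | zero =>
      intro n φ hφ
      rw [Nat.cast_zero, contDiffOn_zero]
      exact fun x hx => (kavg_hasDerivAt hφ n hx).continuousAt.continuousWithinAt
  | succ m ih =>
      intro n φ hφ
      rw [Nat.cast_succ, contDiffOn_succ_iff_deriv_of_isOpen isOpen_Ioo]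
      refine ⟨fun x hx => (kavg_hasDerivAt hφ n hx).differentiableAt.differentiableWithinAt,
        fun h => absurd h (by simp), ?_⟩
      exact (ih (n + 1) (deriv φ) (hφ.deriv_of_isOpen isOpen_Ioo (by simp))).congr
        fun x hx => (kavg_hasDerivAt hφ n hx).deriv

lemma analyticOnNhd_dslope {f : ℝ → F} {ε : ℝ} (hs : IsOpen (Ioo (-ε) ε))
    (h0 : (0 : ℝ) ∈ Ioo (-ε) ε)
    (hf : ContDiffOn ℝ (⊤ : ℕ∞) f (Ioo (-ε) ε)) (hf0 : f 0 = 0) :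
    ContDiffOn ℝ (⊤ : ℕ∞) (dslope f 0) (Ioo (-ε) ε) := by
  have hK : ContDiffOn ℝ (⊤ : ℕ∞) (kavg 0 (deriv f)) (Ioo (-ε) ε) :=
    contDiffOn_infty.mpr fun m =>
      kavg_contDiffOn m 0 (deriv f) (hf.deriv_of_isOpen hs (by simp))
  refine hK.congr fun x hx => ?_
  rcases eq_or_ne x 0 with rfl | hne
  · rw [dslope_same]; simp [kavg]
  · have hd : ∀ z ∈ Ioo (-ε) ε, HasDerivAt f (deriv f z) z := fun z hz =>
      ((hf.differentiableOn (by simp)) z hz |>.differentiableAt (hs.mem_nhds hz)).hasDerivAt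
    have hsub : uIcc 0 x ⊆ Ioo (-ε) ε := ordConnected_Ioo.uIcc_subset h0 hx
    have hint : ∫ y in (0:ℝ)..x, deriv f y = f x - f 0 :=
      intervalIntegral.integral_eq_sub_of_hasDerivAt (fun z hz => hd z (hsub hz))
        ((hf.continuousOn_deriv_of_isOpen hs (by simp)).mono hsub).intervalIntegrable
    rw [dslope_of_ne f hne, slope_def_module, sub_zero, ← hint]
    unfold kavg
    simp only [pow_zero, one_smul]
    rw [intervalIntegral.integral_comp_mul_right (deriv f) hne]
    simp

lemma dslope_of_ne_zero {f : ℝ → F} (hf0 : f 0 = 0) {r : ℝ} (hr : r ≠ 0) :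
    dslope f 0 r = r⁻¹ • f r := by
  rw [dslope_of_ne f hr, slope_def_module, hf0, sub_zero, sub_zero]

lemma dslope_jet {f : ℝ → F} {ε : ℝ} (h0 : (0 : ℝ) ∈ Ioo (-ε) ε)
    (hf : ContDiffOn ℝ (⊤ : ℕ∞) f (Ioo (-ε) ε)) (hf0 : f 0 = 0) (n : ℕ) :
    iteratedDeriv n (dslope f 0) 0 = ((n : ℝ) + 1)⁻¹ • iteratedDeriv (n + 1) f 0 := by
  have hSo : IsOpen (Ioo (-ε) ε) := isOpen_Ioo
  have hh : ContDiffOn ℝ (⊤ : ℕ∞) (dslope f 0) (Ioo (-ε) ε) := analyticOnNhd_dslope hSo h0 hf hf0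
  have hfeq : f = fun y => y • dslope f 0 y := by
    funext y; have := sub_smul_dslope_of_zero hf0 y; rw [sub_zero] at this; exact this.symm
  have P : ∀ n : ℕ, ∀ x ∈ Ioo (-ε) ε, iteratedDeriv (n + 1) (fun y => y • dslope f 0 y) x =
      x • iteratedDeriv (n + 1) (dslope f 0) x +
        ((n : ℝ) + 1) • iteratedDeriv n (dslope f 0) x := by
    intro n
    induction n with
    | zero =>
        intro x hx
        have h1 := (hasDerivAt_id' (x := x)).smul (hasDerivAt_iteratedDeriv hSo hh 0 hx)
        rw [iteratedDeriv_zero] at h1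
        rw [iteratedDeriv_one, iteratedDeriv_zero]
        exact h1.deriv.trans (by simp)
    | succ n ih =>
        intro x hx
        rw [iteratedDeriv_succ]
        have hev : iteratedDeriv (n + 1) (fun y => y • dslope f 0 y) =ᶠ[𝓝 x]
            fun y => y • iteratedDeriv (n + 1) (dslope f 0) y +
              ((n : ℝ) + 1) • iteratedDeriv n (dslope f 0) y := by
          filter_upwards [hSo.mem_nhds hx] with y hy using ih y hy
        rw [hev.deriv_eq]
        have h2 := ((hasDerivAt_id' (x := x)).smul (hasDerivAt_iteratedDeriv hSo hh (n + 1) hx)).add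
          ((hasDerivAt_iteratedDeriv hSo hh n hx).const_smul ((n : ℝ) + 1))
        exact h2.deriv.trans (by push_cast; module)
  have hfn : iteratedDeriv (n + 1) f 0 = ((n : ℝ) + 1) • iteratedDeriv n (dslope f 0) 0 := by
    have hP := P n 0 h0
    rw [zero_smul, zero_add] at hP
    conv_lhs => rw [hfeq]
    exact hP
  rw [hfn, smul_smul, inv_mul_cancel₀ (by positivity), one_smul]

/-- Leibniz rule for iterated derivatives of analytic functions on an open set. -/
lemma leibniz_iteratedDeriv {φ ψ : ℝ → ℂ} {s : Set ℝ} (hs : IsOpen s)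
    (hφ : ContDiffOn ℝ (⊤ : ℕ∞) φ s) (hψ : ContDiffOn ℝ (⊤ : ℕ∞) ψ s) :
    ∀ n, ∀ x ∈ s, iteratedDeriv n (fun y => φ y * ψ y) x =
      ∑ i ∈ Finset.range (n + 1),
        (n.choose i : ℂ) * (iteratedDeriv i φ x * iteratedDeriv (n - i) ψ x) := by
  intro n
  induction n with
  | zero => intro x _; simp
  | succ n ih =>
      intro x hx
      rw [iteratedDeriv_succ]
      have hev : iteratedDeriv n (fun y => φ y * ψ y) =ᶠ[𝓝 x]
          fun y => ∑ i ∈ Finset.range (n + 1),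
            (n.choose i : ℂ) * (iteratedDeriv i φ y * iteratedDeriv (n - i) ψ y) := by
        filter_upwards [hs.mem_nhds hx] with y hy using ih y hy
      rw [hev.deriv_eq]
      have hder : HasDerivAt (fun y => ∑ i ∈ Finset.range (n + 1),
          (n.choose i : ℂ) * (iteratedDeriv i φ y * iteratedDeriv (n - i) ψ y))
          (∑ i ∈ Finset.range (n + 1), (n.choose i : ℂ) *
            (iteratedDeriv (i + 1) φ x * iteratedDeriv (n - i) ψ x +
             iteratedDeriv i φ x * iteratedDeriv (n - i + 1) ψ x)) x := by
        apply HasDerivAt.fun_sum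
        intro i _
        exact (((hasDerivAt_iteratedDeriv hs hφ i hx).mul
          (hasDerivAt_iteratedDeriv hs hψ (n - i) hx)).const_mul _)
      rw [hder.deriv]
      -- now the combinatorial shuffle
      have expand : ∑ i ∈ Finset.range (n + 1), (n.choose i : ℂ) *
            (iteratedDeriv (i + 1) φ x * iteratedDeriv (n - i) ψ x +
             iteratedDeriv i φ x * iteratedDeriv (n - i + 1) ψ x) =
          (∑ i ∈ Finset.range (n + 1), (n.choose i : ℂ) *
            (iteratedDeriv (i + 1) φ x * iteratedDeriv (n - i) ψ x)) +
          ∑ i ∈ Finset.range (n + 1), (n.choose i : ℂ) *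
            (iteratedDeriv i φ x * iteratedDeriv (n + 1 - i) ψ x) := by
        rw [← Finset.sum_add_distrib]
        refine Finset.sum_congr rfl fun i hi => ?_
        simp only [Finset.mem_range] at hi
        have : n - i + 1 = n + 1 - i := by omega
        rw [← this]
        ring
      rw [expand]
      set A := fun i => iteratedDeriv i φ x
      set B := fun i => iteratedDeriv i ψ x
      -- target : ... = ∑ i ∈ range (n+2), ((n+1).choose i : ℂ) * (A i * B (n+1-i))
      rw [Finset.sum_range_succ' (fun i => ((n + 1).choose i : ℂ) * (A i * B (n + 1 - i))) (n + 1)]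
      have hleft : ∑ i ∈ Finset.range (n + 1),
          (((n + 1).choose (i + 1) : ℂ)) * (A (i + 1) * B (n + 1 - (i + 1))) =
          (∑ i ∈ Finset.range (n + 1), (n.choose i : ℂ) * (A (i + 1) * B (n - i))) +
          ∑ i ∈ Finset.range (n + 1), (n.choose (i + 1) : ℂ) * (A (i + 1) * B (n - i)) := by
        rw [← Finset.sum_add_distrib]
        refine Finset.sum_congr rfl fun i hi => ?_
        rw [Nat.choose_succ_succ]
        have : n + 1 - (i + 1) = n - i := by omega
        rw [this]
        push_cast
        ring
      rw [hleft]
      have hright : ∑ i ∈ Finset.range (n + 1), (n.choose i : ℂ) * (A i * B (n + 1 - i)) =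
          ((n.choose 0 : ℂ)) * (A 0 * B (n + 1)) +
          ∑ i ∈ Finset.range n, (n.choose (i + 1) : ℂ) * (A (i + 1) * B (n - i)) := by
        rw [Finset.sum_range_succ' (fun i => (n.choose i : ℂ) * (A i * B (n + 1 - i))) n]
        rw [add_comm]
        have h2 : ∀ i ∈ Finset.range n, (n.choose (i + 1) : ℂ) * (A (i + 1) * B (n + 1 - (i + 1))) =
            (n.choose (i + 1) : ℂ) * (A (i + 1) * B (n - i)) := by
          intro i _
          have h3 : n + 1 - (i + 1) = n - i := by omega
          rw [h3]
        rw [Finset.sum_congr rfl h2]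
        norm_num
      rw [hright]
      have hlast : ∑ i ∈ Finset.range (n + 1), (n.choose (i + 1) : ℂ) * (A (i + 1) * B (n - i)) =
          ∑ i ∈ Finset.range n, (n.choose (i + 1) : ℂ) * (A (i + 1) * B (n - i)) := by
        rw [Finset.sum_range_succ]
        simp
      rw [hlast]
      simp only [A, B, Nat.choose_zero_right, Nat.cast_one, one_mul, Nat.sub_zero]
      ring

end Analytic

section Main

variable (d : ℕ) (B : ℝ → ℝ)

/-- The real logarithmic-derivative factor `B'/B`. -/
noncomputable def bfunR : ℝ → ℝ := fun r => deriv B r / B r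

/-- Its complex coercion. -/
noncomputable def bfunC : ℝ → ℂ := fun r => ((deriv B r / B r : ℝ) : ℂ)

/-- One smooth-extension step of the radial Laplacian. -/
noncomputable def stepFun (g : ℝ → ℂ) : ℝ → ℂ :=
  fun r => deriv (deriv g) r + ((d : ℝ) - 1) • dslope (deriv g) 0 r + bfunC B r * deriv g r

noncomputable def lamR : ℕ → ℝ := fun m => 1 + ((d : ℝ) - 1) / (2 * (m : ℝ) + 1)

noncomputable def muR : ℕ → ℕ → ℝ := fun m j =>
  ((2 * m).choose (2 * m + 1 - 2 * j) : ℝ) * iteratedDeriv (2 * m + 1 - 2 * j) (bfunR B) 0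

variable {d B}
variable {ε : ℝ} (hε : 0 < ε)

lemma sum_odd_reindex (m : ℕ) (F : ℕ → ℂ) (h0 : ∀ i, i ≤ 2 * m → Even i → F i = 0) :
    ∑ i ∈ Finset.range (2 * m + 1), F i = ∑ j ∈ Finset.Icc 1 m, F (2 * m + 1 - 2 * j) := by
  have h1 : ∑ i ∈ (Finset.range (2 * m + 1)).filter (fun i => i % 2 = 1), F i =
      ∑ i ∈ Finset.range (2 * m + 1), F i := by
    apply Finset.sum_filter_of_ne
    intro x hx hne
    simp only [Finset.mem_range] at hx
    by_contra h
    exact hne (h0 x (by omega) (Nat.even_iff.mpr (by omega)))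
  rw [← h1]
  apply Finset.sum_nbij' (i := fun i => (2 * m + 1 - i) / 2) (j := fun j => 2 * m + 1 - 2 * j)
  · intro a ha
    simp only [Finset.mem_filter, Finset.mem_range] at ha
    simp only [Finset.mem_Icc]
    omega
  · intro a ha
    simp only [Finset.mem_Icc] at ha
    simp only [Finset.mem_filter, Finset.mem_range]
    omega
  · intro a ha
    simp only [Finset.mem_filter, Finset.mem_range] at ha
    omega
  · intro a ha
    simp only [Finset.mem_Icc] at ha
    omega
  · intro a ha
    simp only [Finset.mem_filter, Finset.mem_range] at ha
    congr 1
    omega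

section WithB

variable (hB : ContDiffOn ℝ (⊤ : ℕ∞) B (Ioo (-ε) ε))
  (hBeven : ∀ r ∈ Ioo (-ε) ε, B (-r) = B r)
  (hBpos : ∀ r ∈ Ioo (-ε) ε, 0 < B r)

include hε

lemma h0S : (0 : ℝ) ∈ Ioo (-ε) ε := by constructor <;> simp [hε] <;> linarith

include hB hBpos in
lemma hbR_analytic : ContDiffOn ℝ (⊤ : ℕ∞) (bfunR B) (Ioo (-ε) ε) := by
  have hBa : ContDiffOn ℝ (⊤ : ℕ∞) B (Ioo (-ε) ε) := hB
  exact (hBa.deriv_of_isOpen isOpen_Ioo (by simp)).div hBa (fun x hx => (hBpos x hx).ne')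

include hB hBpos in
lemma hbC_analytic : ContDiffOn ℝ (⊤ : ℕ∞) (bfunC B) (Ioo (-ε) ε) := by
  have h := Complex.ofRealCLM.contDiff.comp_contDiffOn (hbR_analytic hε hB hBpos)
  exact h

include hB hBeven hBpos in
lemma hbR_odd : ∀ᶠ x in 𝓝 (0 : ℝ), bfunR B (-x) = -bfunR B x := by
  have hBodd : ∀ x ∈ Ioo (-ε) ε, deriv B (-x) = -deriv B x := by
    intro x hx
    have hEv : (fun y => B (-y)) =ᶠ[𝓝 x] B := by
      filter_upwards [isOpen_Ioo.mem_nhds hx] with y hy using hBeven y hy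
    have h1 : deriv (fun y => B (-y)) x = deriv B x := hEv.deriv_eq
    rw [deriv_comp_neg] at h1
    linarith [h1]
  filter_upwards [isOpen_Ioo.mem_nhds (h0S hε)] with x hx
  have hxneg : -x ∈ Ioo (-ε) ε := by
    simp only [mem_Ioo] at hx ⊢; constructor <;> linarith [hx.1, hx.2]
  unfold bfunR
  rw [hBodd x hx, hBeven x hx, neg_div]

include hB hBeven hBpos in
lemma hb_jet_even (i : ℕ) (hi : Even i) : iteratedDeriv i (bfunC B) 0 = 0 := by
  have h1 : iteratedDeriv i (bfunC B) 0 = ((iteratedDeriv i (bfunR B) 0 : ℝ) : ℂ) :=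
    iteratedDeriv_ofReal isOpen_Ioo (hbR_analytic hε hB hBpos) i 0 (h0S hε)
  rw [h1, jet_even_of_odd (hbR_odd hε hB hBeven hBpos) hi, Complex.ofReal_zero]

include hB hBeven hBpos in
lemma hb_jet_odd (i : ℕ) :
    iteratedDeriv i (bfunC B) 0 = ((iteratedDeriv i (bfunR B) 0 : ℝ) : ℂ) :=
  iteratedDeriv_ofReal isOpen_Ioo (hbR_analytic hε hB hBpos) i 0 (h0S hε)

variable {g : ℝ → ℂ}

include hB hBeven hBpos in
/-- Jets of one step at `0`. -/
lemma stepFun_jet (hg : ContDiffOn ℝ (⊤ : ℕ∞) g (Ioo (-ε) ε)) (hg10 : deriv g 0 = 0) (n : ℕ) :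
    iteratedDeriv n (stepFun d B g) 0 =
      iteratedDeriv (n + 2) g 0 +
        ((d : ℝ) - 1) • (((n : ℝ) + 1)⁻¹ • iteratedDeriv (n + 2) g 0) +
        ∑ i ∈ Finset.range (n + 1),
          ((n.choose i : ℂ)) *
            (iteratedDeriv i (bfunC B) 0 * iteratedDeriv (n - i + 1) g 0) := by
  classical
  set S := Ioo (-ε) ε with hS
  have hSopen : IsOpen S := isOpen_Ioo
  have hUD : UniqueDiffOn ℝ S := hSopen.uniqueDiffOn
  have h0 : (0 : ℝ) ∈ S := h0S hε
  have hg1 : ContDiffOn ℝ (⊤ : ℕ∞) (deriv g) S := hg.deriv_of_isOpen hSopen (by simp)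
  have hT1a : ContDiffOn ℝ (⊤ : ℕ∞) (deriv (deriv g)) S := hg1.deriv_of_isOpen hSopen (by simp)
  have hdsa : ContDiffOn ℝ (⊤ : ℕ∞) (dslope (deriv g) 0) S :=
    analyticOnNhd_dslope hSopen h0 hg1 hg10
  have hT2a : ContDiffOn ℝ (⊤ : ℕ∞) (fun r => ((d : ℝ) - 1) • dslope (deriv g) 0 r) S :=
    hdsa.const_smul ((d : ℝ) - 1)
  have hT3a : ContDiffOn ℝ (⊤ : ℕ∞) (fun r => bfunC B r * deriv g r) S :=
    (hbC_analytic hε hB hBpos).mul hg1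
  have hc : ∀ {f : ℝ → ℂ}, ContDiffOn ℝ (⊤ : ℕ∞) f S → ContDiffWithinAt ℝ n f S 0 :=
    fun hf => (hf 0 h0).of_le (by exact_mod_cast le_top)
  have hT12a : ContDiffOn ℝ (⊤ : ℕ∞)
      (fun r => deriv (deriv g) r + ((d : ℝ) - 1) • dslope (deriv g) 0 r) S :=
    hT1a.add hT2a
  -- split the sum
  have split1 : iteratedDeriv n (stepFun d B g) 0 =
      iteratedDeriv n
        (fun r => deriv (deriv g) r + ((d : ℝ) - 1) • dslope (deriv g) 0 r) 0 +
      iteratedDeriv n (fun r => bfunC B r * deriv g r) 0 := by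
    rw [← itDW_eq_itD hSopen h0 n, ← itDW_eq_itD hSopen h0 n, ← itDW_eq_itD hSopen h0 n]
    exact iteratedDerivWithin_add h0 hUD (hc hT12a) (hc hT3a)
  have split2 : iteratedDeriv n
      (fun r => deriv (deriv g) r + ((d : ℝ) - 1) • dslope (deriv g) 0 r) 0 =
      iteratedDeriv n (deriv (deriv g)) 0 +
      iteratedDeriv n (fun r => ((d : ℝ) - 1) • dslope (deriv g) 0 r) 0 := by
    rw [← itDW_eq_itD hSopen h0 n, ← itDW_eq_itD hSopen h0 n, ← itDW_eq_itD hSopen h0 n]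
    exact iteratedDerivWithin_add h0 hUD (hc hT1a) (hc hT2a)
  have hT1 : iteratedDeriv n (deriv (deriv g)) 0 = iteratedDeriv (n + 2) g 0 := by
    have e1 : iteratedDeriv (n + 2) g = iteratedDeriv (n + 1) (deriv g) := by
      rw [iteratedDeriv_succ']
    have e2 : iteratedDeriv (n + 1) (deriv g) = iteratedDeriv n (deriv (deriv g)) := by
      rw [iteratedDeriv_succ']
    rw [e1, e2]
  have hT2 : iteratedDeriv n (fun r => ((d : ℝ) - 1) • dslope (deriv g) 0 r) 0 =
      ((d : ℝ) - 1) • (((n : ℝ) + 1)⁻¹ • iteratedDeriv (n + 2) g 0) := by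
    have e0 : iteratedDeriv n (fun r => ((d : ℝ) - 1) • dslope (deriv g) 0 r) 0 =
        ((d : ℝ) - 1) • iteratedDeriv n (dslope (deriv g) 0) 0 := by
      rw [← itDW_eq_itD hSopen h0 n, ← itDW_eq_itD hSopen h0 n]
      exact iteratedDerivWithin_const_smul h0 hUD ((d : ℝ) - 1) (hc hdsa)
    rw [e0, dslope_jet h0 hg1 hg10 n]
    congr 2
    rw [← hT1, iteratedDeriv_succ']
  have hT3 : iteratedDeriv n (fun r => bfunC B r * deriv g r) 0 =
      ∑ i ∈ Finset.range (n + 1),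
        ((n.choose i : ℂ)) *
          (iteratedDeriv i (bfunC B) 0 * iteratedDeriv (n - i + 1) g 0) := by
    rw [leibniz_iteratedDeriv hSopen (hbC_analytic hε hB hBpos) hg1 n 0 h0]
    refine Finset.sum_congr rfl fun i _ => ?_
    congr 2
    rw [← iteratedDeriv_succ']
  rw [split1, split2, hT1, hT2, hT3]

include hB hBeven hBpos in
lemma stepFun_odd_jet (hg : ContDiffOn ℝ (⊤ : ℕ∞) g (Ioo (-ε) ε))
    (hodd : ∀ n, Odd n → iteratedDeriv n g 0 = 0) (n : ℕ) (hn : Odd n) :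
    iteratedDeriv n (stepFun d B g) 0 = 0 := by
  have hg10 : deriv g 0 = 0 := by
    have := hodd 1 odd_one
    rwa [iteratedDeriv_one] at this
  rw [stepFun_jet hε hB hBeven hBpos hg hg10 n]
  rw [hodd (n + 2) (by rcases hn with ⟨t, ht⟩; exact ⟨t + 1, by omega⟩)]
  rw [Finset.sum_eq_zero, smul_zero, smul_zero]
  · simp
  · intro i hi
    simp only [Finset.mem_range] at hi
    rcases Nat.even_or_odd i with hieven | hiodd
    · rw [hb_jet_even hε hB hBeven hBpos i hieven]
      ring
    · have : Odd (n - i + 1) := by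
        rcases hn with ⟨t, ht⟩
        rcases hiodd with ⟨s, hs⟩
        exact ⟨t - s, by omega⟩
      rw [hodd (n - i + 1) this]
      ring

include hB hBeven hBpos in
lemma stepFun_even_jet (hg : ContDiffOn ℝ (⊤ : ℕ∞) g (Ioo (-ε) ε))
    (hodd : ∀ n, Odd n → iteratedDeriv n g 0 = 0) (m : ℕ) :
    iteratedDeriv (2 * m) (stepFun d B g) 0 =
      stepMap (lamR d) (muR B) (fun j => iteratedDeriv (2 * j) g 0) m := by
  have hg10 : deriv g 0 = 0 := by
    have := hodd 1 odd_one
    rwa [iteratedDeriv_one] at this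
  rw [stepFun_jet hε hB hBeven hBpos hg hg10 (2 * m)]
  have hsum : ∑ i ∈ Finset.range (2 * m + 1),
      ((2 * m).choose i : ℂ) *
        (iteratedDeriv i (bfunC B) 0 * iteratedDeriv (2 * m - i + 1) g 0) =
      ∑ j ∈ Finset.Icc 1 m, ((muR B m j : ℝ) : ℂ) * iteratedDeriv (2 * j) g 0 := by
    rw [sum_odd_reindex m _ ?_]
    · refine Finset.sum_congr rfl fun j hj => ?_
      simp only [Finset.mem_Icc] at hj
      have hidx : 2 * m - (2 * m + 1 - 2 * j) + 1 = 2 * j := by omega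
      rw [hidx, hb_jet_odd hε hB hBeven hBpos]
      unfold muR
      push_cast
      ring
    · intro i hi hieven
      rw [hb_jet_even hε hB hBeven hBpos i hieven]
      ring
  rw [hsum]
  simp only [stepMap]
  have hidx2 : 2 * (m + 1) = 2 * m + 2 := by ring
  rw [hidx2]
  congr 1
  -- first two terms equal (lamR d m : ℂ) * iteratedDeriv (2*m+2) g 0
  rw [Complex.real_smul, Complex.real_smul]
  unfold lamR
  push_cast
  have hne : (2 * (m : ℂ) + 1) ≠ 0 := by
    have h2 : ((2 * m + 1 : ℕ) : ℂ) ≠ 0 := Nat.cast_ne_zero.mpr (by omega)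
    push_cast at h2
    exact h2
  field_simp

include hB in
lemma stepFun_eq_radial (hg10 : deriv g 0 = 0) :
    ∀ r ∈ Ioo (0 : ℝ) ε, stepFun d B g r = radialLaplacian d B g r := by
  intro r hr
  have hrne : r ≠ 0 := ne_of_gt hr.1
  unfold stepFun radialLaplacian bfunC
  rw [dslope_of_ne_zero hg10 hrne]
  rw [Complex.real_smul, Complex.real_smul]
  push_cast
  ring

include hB hBeven hBpos in
lemma stepFun_analytic (hg : ContDiffOn ℝ (⊤ : ℕ∞) g (Ioo (-ε) ε)) (hg10 : deriv g 0 = 0) :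
    ContDiffOn ℝ (⊤ : ℕ∞) (stepFun d B g) (Ioo (-ε) ε) := by
  have hg1 : ContDiffOn ℝ (⊤ : ℕ∞) (deriv g) (Ioo (-ε) ε) := hg.deriv_of_isOpen isOpen_Ioo (by simp)
  exact ((hg1.deriv_of_isOpen isOpen_Ioo (by simp)).add (
    (analyticOnNhd_dslope isOpen_Ioo (h0S hε) hg1 hg10).const_smul ((d : ℝ) - 1))).add
    ((hbC_analytic hε hB hBpos).mul hg1)

omit hε in
lemma radialLaplacian_congr {d : ℕ} {B : ℝ → ℝ} {f g : ℝ → ℂ} {r : ℝ}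
    (h : f =ᶠ[𝓝 r] g) : radialLaplacian d B f r = radialLaplacian d B g r := by
  unfold radialLaplacian
  rw [h.deriv_eq, (h.deriv).deriv_eq]

include hε hB hBeven hBpos in
lemma iterate_main {u : ℝ → ℂ} (hu : ContDiffOn ℝ (⊤ : ℕ∞) u (Ioo (-ε) ε))
    (huodd : ∀ n, Odd n → iteratedDeriv n u 0 = 0) (k : ℕ) :
    ContDiffOn ℝ (⊤ : ℕ∞) ((stepFun d B)^[k] u) (Ioo (-ε) ε) ∧
    (∀ n, Odd n → iteratedDeriv n ((stepFun d B)^[k] u) 0 = 0) ∧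
    (∀ m, iteratedDeriv (2 * m) ((stepFun d B)^[k] u) 0 =
      (stepMap (lamR d) (muR B))^[k] (fun j => iteratedDeriv (2 * j) u 0) m) ∧
    (∀ r ∈ Ioo (0 : ℝ) ε, (radialLaplacian d B)^[k] u r = (stepFun d B)^[k] u r) := by
  induction k with
  | zero => exact ⟨hu, huodd, fun m => rfl, fun r hr => rfl⟩
  | succ k ih =>
      obtain ⟨ha, ho, hj, he⟩ := ih
      have hg10 : deriv ((stepFun d B)^[k] u) 0 = 0 := by
        have := ho 1 odd_one; rwa [iteratedDeriv_one] at this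
      refine ⟨?_, ?_, ?_, ?_⟩
      · rw [Function.iterate_succ_apply']
        exact stepFun_analytic hε hB hBeven hBpos ha hg10
      · intro n hn
        rw [Function.iterate_succ_apply']
        exact stepFun_odd_jet hε hB hBeven hBpos ha ho n hn
      · intro m
        rw [Function.iterate_succ_apply', Function.iterate_succ_apply']
        rw [stepFun_even_jet hε hB hBeven hBpos ha ho m]
        have hfun : (fun j => iteratedDeriv (2 * j) ((stepFun d B)^[k] u) 0) =
            (stepMap (lamR d) (muR B))^[k] (fun j => iteratedDeriv (2 * j) u 0) :=
          funext hj
        rw [hfun]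
      · intro r hr
        rw [Function.iterate_succ_apply', Function.iterate_succ_apply']
        have hev : (radialLaplacian d B)^[k] u =ᶠ[𝓝 r] (stepFun d B)^[k] u := by
          filter_upwards [isOpen_Ioo.mem_nhds hr] with y hy using he y hy
        rw [radialLaplacian_congr hev]
        exact (stepFun_eq_radial hε hB hg10 r hr).symm

end WithB

end Main

end Stmt11Aux

open Stmt11Aux in
/-- Let `d ≥ 2`, `ε > 0`, and let `B` be a smooth even positive
function on `(-ε,ε)` with `B 0 = 1` and `B' 0 = 0`.  For every `k ≥ 1` there are real
constants `c 1, …, c k` with `c k ≠ 0`, depending only on `d`, `B` and `k` (not on the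
function), such that for every smooth even `u : (-ε,ε) → ℂ` the limit
`lim_{r→0⁺} (L_A^[k] u) r` exists and equals `∑_{j=1}^k c j · u^(2j)(0)`.
Consequently, there are real constants `b 1, …, b k` (again independent of `u`) such
that `u^(2k)(0) = ∑_{j=1}^k b j · lim_{r→0⁺} (L_A^[j] u) r` for every such `u`. -/
theorem stmt_11
    (d : ℕ) (hd : 2 ≤ d) (ε : ℝ) (hε : 0 < ε)
    (B : ℝ → ℝ) (hB : ContDiffOn ℝ (⊤ : ℕ∞) B (Ioo (-ε) ε))
    (hBeven : ∀ r ∈ Ioo (-ε) ε, B (-r) = B r)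
    (hB0 : B 0 = 1) (hB'0 : deriv B 0 = 0)
    (hBpos : ∀ r ∈ Ioo (-ε) ε, 0 < B r)
    (k : ℕ) (hk : 1 ≤ k) :
    ∃ c : ℕ → ℝ, c k ≠ 0 ∧
      (∀ u : ℝ → ℂ, ContDiffOn ℝ (⊤ : ℕ∞) u (Ioo (-ε) ε) →
        (∀ r ∈ Ioo (-ε) ε, u (-r) = u r) →
        Tendsto ((radialLaplacian d B)^[k] u) (𝓝[>] (0 : ℝ))
          (𝓝 (∑ j ∈ Finset.Icc 1 k,
            (c j : ℂ) * iteratedDerivWithin (2 * j) u (Ioo (-ε) ε) 0))) ∧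
      ∃ b : ℕ → ℝ,
        ∀ u : ℝ → ℂ, ContDiffOn ℝ (⊤ : ℕ∞) u (Ioo (-ε) ε) →
          (∀ r ∈ Ioo (-ε) ε, u (-r) = u r) →
          ∀ ℓ : ℕ → ℂ,
            (∀ j ∈ Finset.Icc 1 k,
              Tendsto ((radialLaplacian d B)^[j] u) (𝓝[>] (0 : ℝ)) (𝓝 (ℓ j))) →
            iteratedDerivWithin (2 * k) u (Ioo (-ε) ε) 0 =
              ∑ j ∈ Finset.Icc 1 k, (b j : ℂ) * ℓ j := by
  have h0 : (0 : ℝ) ∈ Ioo (-ε) ε := h0S hε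
  -- positivity of the diagonal coefficients
  have hlampos : ∀ i : ℕ, 0 < lamR d i := by
    intro i
    have hd1 : (0 : ℝ) ≤ (d : ℝ) - 1 := by
      have : (2 : ℝ) ≤ (d : ℝ) := by exact_mod_cast hd
      linarith
    have h2i : (0 : ℝ) < 2 * (i : ℝ) + 1 := by positivity
    unfold lamR
    have := div_nonneg hd1 h2i.le
    linarith
  have hdiag : ∀ k', 1 ≤ k' → ecoef (lamR d) (muR B) k' 0 k' ≠ 0 := by
    intro k' _
    have h1 : ecoef (lamR d) (muR B) k' 0 (0 + k') = ∏ i ∈ Finset.range k', lamR d (0 + i) :=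
      ecoef_diag (lamR d) (muR B) k' 0
    rw [zero_add] at h1
    rw [h1]
    have : 0 < ∏ i ∈ Finset.range k', lamR d (0 + i) :=
      Finset.prod_pos fun i _ => hlampos (0 + i)
    exact this.ne'
  -- the key convergence statement
  have key : ∀ u : ℝ → ℂ, ContDiffOn ℝ (⊤ : ℕ∞) u (Ioo (-ε) ε) →
      (∀ r ∈ Ioo (-ε) ε, u (-r) = u r) → ∀ k', 1 ≤ k' →
      Tendsto ((radialLaplacian d B)^[k'] u) (𝓝[>] (0 : ℝ))
        (𝓝 (∑ j ∈ Finset.Icc 1 k',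
          ((ecoef (lamR d) (muR B) k' 0 j : ℝ) : ℂ) *
            iteratedDerivWithin (2 * j) u (Ioo (-ε) ε) 0)) := by
    intro u hu hueven k' hk'
    have hua : ContDiffOn ℝ (⊤ : ℕ∞) u (Ioo (-ε) ε) := hu
    have huodd : ∀ n, Odd n → iteratedDeriv n u 0 = 0 := by
      intro n hn
      refine jet_odd_of_even ?_ hn
      filter_upwards [isOpen_Ioo.mem_nhds h0] with y hy using hueven y hy
    obtain ⟨ha, ho, hj, he⟩ := iterate_main hε hB hBeven hBpos hua huodd k'
    have hval : (stepFun d B)^[k'] u 0 =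
        ∑ j ∈ Finset.Icc 1 k',
          ((ecoef (lamR d) (muR B) k' 0 j : ℝ) : ℂ) *
            iteratedDerivWithin (2 * j) u (Ioo (-ε) ε) 0 := by
      have h00 := hj 0
      rw [show 2 * 0 = 0 from rfl, iteratedDeriv_zero] at h00
      rw [h00]
      rw [stepMap_iter (lamR d) (muR B) _ k' 0 (fun hcon => absurd hcon (by omega))]
      rw [zero_add]
      refine Finset.sum_congr rfl fun j _ => ?_
      rw [itDW_eq_itD isOpen_Ioo h0]
    have hcont : Tendsto ((stepFun d B)^[k'] u) (𝓝[>] (0 : ℝ))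
        (𝓝 ((stepFun d B)^[k'] u 0)) :=
      ((ha.continuousOn.continuousAt (isOpen_Ioo.mem_nhds h0)).tendsto).mono_left nhdsWithin_le_nhds
    rw [hval] at hcont
    refine hcont.congr' ?_
    filter_upwards [Ioo_mem_nhdsGT_of_mem (show (0:ℝ) ∈ Ico (0:ℝ) ε from ⟨le_refl _, hε⟩)]
      with y hy
    exact (he y hy).symm
  refine ⟨fun j => ecoef (lamR d) (muR B) k 0 j, hdiag k hk, ?_, ?_⟩
  · intro u hu hueven
    exact key u hu hueven k hk
  · refine ⟨fun j => binv (fun p q => ecoef (lamR d) (muR B) p 0 q) k j, ?_⟩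
    intro u hu hueven ℓ hℓ
    have := binv_spec (fun p q => ecoef (lamR d) (muR B) p 0 q)
      (fun i hi => hdiag i hi) k hk
      (fun i => iteratedDerivWithin (2 * i) u (Ioo (-ε) ε) 0) ℓ ?_
    · exact this
    · intro j hj1 hj2
      exact tendsto_nhds_unique (hℓ j (Finset.mem_Icc.mpr ⟨hj1, hj2⟩))
        (key u hu hueven j hj1)
end
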